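/- arXiv:2604.24134 — 4 statements merged into one kernel-verified Lean document; each statement's English description precedes it below -/
import Mathlib

section
/- For every positive integer m there exists a rooted tree with exactly m leaves, labeled 1 through m, such that (1) the i-th leaf has depth at most C·α(i) + C for an absolute constant C, where α(i) := min{k ≥ 1 : 3 ↑^k 2 > i}, and (2) every node on the root-to-leaf path of the i-th leaf has at most max(i, 9) children. -/
/-- Knuth's up-arrow notation. -/
def uparrow (a : ℕ) : ℕ → ℕ → ℕ
  | 0, _ => 0
  | 1, b => a ^ b
  | _+2, 0 => 0
  | _+2, 1 => a
  | k+2, b+2 => uparrow a (k+1) (uparrow a (k+2) (b+1))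
  termination_by k b => (k, b)

/-- `α(i) := min {k ≥ 1 : 3 ↑^k 2 > i}`. -/
noncomputable def alphaFn (m : ℕ) : ℕ := sInf {k : ℕ | 1 ≤ k ∧ m < uparrow 3 k 2}

/-- A finite rooted tree: nodes are `Fin n`, with a root, a parent function, and a
depth function (distance to the root) certifying the tree structure. -/
structure IndexTree where
  n : ℕ
  npos : 0 < n
  root : Fin n
  parent : Fin n → Fin n
  depth : Fin n → ℕ
  parent_root : parent root = root
  depth_root : depth root = 0
  depth_parent : ∀ v, v ≠ root → depth v = depth (parent v) + 1

/-- A node is a leaf if it has no children. -/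
def IndexTree.IsLeaf (T : IndexTree) (v : Fin T.n) : Prop :=
  ∀ u, T.parent u = v → u = v

/-- The number of children of a node. -/
def IndexTree.numChildren (T : IndexTree) (v : Fin T.n) : ℕ :=
  (Finset.univ.filter (fun u => T.parent u = v ∧ u ≠ v)).card

/-- `v` lies on the root-to-`u` path, i.e. `v` is an ancestor of `u` (or `u` itself). -/
def IndexTree.OnRootPath (T : IndexTree) (v u : Fin T.n) : Prop :=
  ∃ t : ℕ, T.parent^[t] u = v

/-!
The leaf labelled `i < 9` is a child of the root, which thus has at most 9 children. For `i ≥ 9`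
put `k = α(i) ≥ 2` and `b = 3 ↑^(k-1) 2 ≤ i`. The path to leaf `i` first spells the unary code
`0^k 1` of `k` (depth `k + 1`, two children per node), then the `k` digits of `i` in the mixed
radix system of the fast-growing hierarchy `f₀ n = n + 1`, `f_{d+1} n = f_d^[n] n`: as
`f_{d+1} b = f_d^[b] b`, the range `[b, f_{d+1} b)` splits into the `b` blocks
`[f_d^[j] b, f_d^[j+1] b)`, each a range of level `d`. A node on the path has one child per block
of a range whose base is at most `i`, hence fewer than `i` children. Finally `i` lies in
`[b, f_k b)` because `3 ↑^k 2 ≤ f_k (3 ↑^(k-1) 2)`: the recursion of `↑^(j+1)` is dominated step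
by step by `f_{j+2} (f_{j+3} n) ≤ f_{j+3} (n + 1)`. So `C = 2` works.
-/

section Uparrow

variable {a k b : ℕ}

lemma uparrow_one : uparrow a 1 b = a ^ b := by
  simp [uparrow]

lemma uparrow_succ_one (hk : 1 ≤ k) : uparrow a (k + 1) 1 = a := by
  obtain ⟨k, rfl⟩ := Nat.exists_eq_add_of_le' hk
  simp [uparrow]

lemma uparrow_succ_succ (hk : 1 ≤ k) (hb : 1 ≤ b) :
    uparrow a (k + 1) (b + 1) = uparrow a k (uparrow a (k + 1) b) := by
  obtain ⟨k, rfl⟩ := Nat.exists_eq_add_of_le' hk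
  obtain ⟨b, rfl⟩ := Nat.exists_eq_add_of_le' hb
  rw [uparrow]

lemma uparrow_succ_two (hk : 1 ≤ k) : uparrow a (k + 1) 2 = uparrow a k a := by
  rw [uparrow_succ_succ hk le_rfl, uparrow_succ_one hk]

lemma lt_uparrow (ha : 2 ≤ a) (hk : 1 ≤ k) (hb : 1 ≤ b) : b < uparrow a k b := by
  induction k, hk using Nat.le_induction generalizing b with
  | base => simpa [uparrow_one] using Nat.lt_pow_self ha
  | succ k hk ih =>
    induction b, hb using Nat.le_induction with
    | base => rw [uparrow_succ_one hk]; omega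
    | succ b hb ihb =>
      rw [uparrow_succ_succ hk hb]
      have := ih (b := uparrow a (k + 1) b) (by omega)
      omega

lemma uparrow_lt_uparrow_succ (ha : 2 ≤ a) (hk : 1 ≤ k) (hb : 1 ≤ b) :
    uparrow a k b < uparrow a k (b + 1) := by
  obtain rfl | hk := hk.eq_or_lt
  · simpa [uparrow_one] using Nat.pow_lt_pow_right ha (Nat.lt_succ_self b)
  · obtain ⟨k, rfl⟩ := Nat.exists_eq_add_of_le' hk
    rw [uparrow_succ_succ (by omega) hb]
    exact lt_uparrow ha (by omega) (by have := lt_uparrow ha hk.le hb; omega)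

lemma strictMono_uparrow_three_succ_two : StrictMono fun k => uparrow 3 (k + 1) 2 :=
  strictMono_nat_of_lt_succ fun k => by
    rw [uparrow_succ_two (a := 3) (by omega : 1 ≤ k + 1)]
    exact uparrow_lt_uparrow_succ (by norm_num) (by omega) (by norm_num)

end Uparrow

section Alpha

lemma alphaFn_spec (i : ℕ) : 1 ≤ alphaFn i ∧ i < uparrow 3 (alphaFn i) 2 := by
  refine Nat.sInf_mem (s := {k | 1 ≤ k ∧ i < uparrow 3 k 2}) ⟨i + 2, by omega, ?_⟩
  calc i ≤ uparrow 3 (i + 1) 2 := strictMono_uparrow_three_succ_two.id_le i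
    _ < uparrow 3 (i + 2) 2 := strictMono_uparrow_three_succ_two (Nat.lt_succ_self i)

variable {i : ℕ}

lemma two_le_alphaFn (hi : 9 ≤ i) : 2 ≤ alphaFn i := by
  obtain ⟨h1, hlt⟩ := alphaFn_spec i
  by_contra! h
  rw [show alphaFn i = 1 by omega, uparrow_one] at hlt
  omega

lemma uparrow_pred_alphaFn_le (hi : 9 ≤ i) : uparrow 3 (alphaFn i - 1) 2 ≤ i := by
  have h := two_le_alphaFn hi
  by_contra! hlt
  exact Nat.notMem_of_lt_sInf (by omega : alphaFn i - 1 < alphaFn i) ⟨by omega, hlt⟩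

end Alpha

def fastGrowing : ℕ → ℕ → ℕ
  | 0, n => n + 1
  | d + 1, n => (fastGrowing d)^[n] n

section FastGrowing

lemma fastGrowing_succ_apply (d n : ℕ) : fastGrowing (d + 1) n = (fastGrowing d)^[n] n := rfl

lemma id_le_fastGrowing (d : ℕ) : id ≤ fastGrowing d := by
  induction d with
  | zero => intro n; simp [fastGrowing]
  | succ d ih => intro n; exact Function.id_le_iterate_of_id_le ih n n

lemma lt_fastGrowing (d : ℕ) {n : ℕ} (hn : 1 ≤ n) : n < fastGrowing d n := by
  induction d generalizing n with
  | zero => simp [fastGrowing]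
  | succ d ih =>
    obtain ⟨m, rfl⟩ := Nat.exists_eq_add_of_le' hn
    rw [fastGrowing_succ_apply, Function.iterate_succ_apply']
    have hm : m + 1 ≤ (fastGrowing d)^[m] (m + 1) :=
      Function.id_le_iterate_of_id_le (id_le_fastGrowing d) m _
    exact hm.trans_lt (ih (by omega))

lemma monotone_fastGrowing (d : ℕ) : Monotone (fastGrowing d) := by
  induction d with
  | zero => intro n n' h; simp [fastGrowing, h]
  | succ d ih =>
    intro n n' h
    calc (fastGrowing d)^[n] n ≤ (fastGrowing d)^[n] n' := ih.iterate n h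
      _ ≤ (fastGrowing d)^[n'] n' :=
        ih.monotone_iterate_of_le_map (id_le_fastGrowing d n') h

lemma fastGrowing_apply_fastGrowing_succ_le (d n : ℕ) :
    fastGrowing d (fastGrowing (d + 1) n) ≤ fastGrowing (d + 1) (n + 1) := by
  rw [fastGrowing_succ_apply, fastGrowing_succ_apply, Function.iterate_succ_apply']
  exact monotone_fastGrowing d (((monotone_fastGrowing d).iterate n) n.le_succ)

lemma fastGrowing_two (n : ℕ) : fastGrowing 2 n = 2 ^ n * n := by
  have h1 : fastGrowing 1 = (2 * ·) := by
    funext n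
    rw [fastGrowing_succ_apply, show fastGrowing 0 = Nat.succ from rfl, Nat.succ_iterate]
    ring
  rw [fastGrowing_succ_apply, h1, mul_left_iterate]

lemma three_pow_le_fastGrowing_three {n : ℕ} (hn : 2 ≤ n) : 3 ^ n ≤ fastGrowing 3 n := by
  induction n, hn using Nat.le_induction with
  | base =>
    rw [fastGrowing_succ_apply 2 2]
    norm_num [fastGrowing_two]
  | succ n hn ih =>
    calc 3 ^ (n + 1) ≤ 3 * fastGrowing 3 n := by rw [pow_succ']; omega
      _ ≤ fastGrowing 2 (fastGrowing 3 n) := by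
        have h4 : 4 ≤ 2 ^ fastGrowing 3 n :=
          Nat.pow_le_pow_right two_pos (hn.trans (id_le_fastGrowing 3 n))
        rw [fastGrowing_two]
        nlinarith
      _ ≤ fastGrowing 3 (n + 1) := fastGrowing_apply_fastGrowing_succ_le 2 n

lemma uparrow_three_le_fastGrowing {k n : ℕ} (hk : 1 ≤ k) (hn : 2 ≤ n) :
    uparrow 3 k n ≤ fastGrowing (k + 2) n := by
  induction k, hk using Nat.le_induction generalizing n with
  | base => rw [uparrow_one]; exact three_pow_le_fastGrowing_three hn
  | succ k hk ih =>
    induction n, hn using Nat.le_induction with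
    | base =>
      calc uparrow 3 (k + 1) 2 = uparrow 3 k 3 := uparrow_succ_two hk
        _ ≤ fastGrowing (k + 2) 3 := ih (by norm_num)
        _ ≤ fastGrowing (k + 2) (fastGrowing (k + 2) 2) :=
          monotone_fastGrowing _ (lt_fastGrowing _ (by norm_num))
        _ = fastGrowing (k + 3) 2 := rfl
    | succ n hn ihn =>
      have h2 : 2 ≤ uparrow 3 (k + 1) n :=
        hn.trans (lt_uparrow (by norm_num) (by omega) (by omega)).le
      calc uparrow 3 (k + 1) (n + 1) = uparrow 3 k (uparrow 3 (k + 1) n) :=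
            uparrow_succ_succ hk (by omega)
        _ ≤ fastGrowing (k + 2) (uparrow 3 (k + 1) n) := ih h2
        _ ≤ fastGrowing (k + 2) (fastGrowing (k + 3) n) := monotone_fastGrowing _ ihn
        _ ≤ fastGrowing (k + 3) (n + 1) := fastGrowing_apply_fastGrowing_succ_le _ n

lemma uparrow_three_succ_two_le_fastGrowing {k : ℕ} (hk : 1 ≤ k) :
    uparrow 3 (k + 1) 2 ≤ fastGrowing (k + 1) (uparrow 3 k 2) := by
  obtain rfl | hk := hk.eq_or_lt
  · rw [uparrow_succ_two le_rfl, uparrow_one, uparrow_one, fastGrowing_two]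
    norm_num
  · obtain ⟨k, rfl⟩ : ∃ j, k = j + 1 := ⟨k - 1, by omega⟩
    have h2 : 2 ≤ uparrow 3 (k + 1) 2 := (lt_uparrow (by norm_num) (by omega) (by omega)).le
    calc uparrow 3 (k + 2) 2 = uparrow 3 k (uparrow 3 (k + 1) 2) := by
          rw [uparrow_succ_two (by omega), uparrow_succ_succ (by omega) (by omega)]
      _ ≤ fastGrowing (k + 2) (uparrow 3 (k + 1) 2) := uparrow_three_le_fastGrowing (by omega) h2

end FastGrowing

def blockIndex (f : ℕ → ℕ) (x n i : ℕ) : ℕ :=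
  Nat.findGreatest (fun j => f^[j] x ≤ i) n

section BlockIndex

variable {f : ℕ → ℕ} {x n i : ℕ}

lemma iterate_blockIndex_le (hx : x ≤ i) : f^[blockIndex f x n i] x ≤ i :=
  Nat.findGreatest_spec (P := fun j => f^[j] x ≤ i) (Nat.zero_le n) hx

lemma blockIndex_lt (hx : x ≤ i) (hi : i < f^[n] x) : blockIndex f x n i < n := by
  refine (Nat.findGreatest_le n).lt_of_ne fun h => ?_
  have := iterate_blockIndex_le (f := f) (n := n) hx
  rw [blockIndex, h] at this
  omega

lemma mem_Ico_iterate_blockIndex (hi : i ∈ Set.Ico x (f^[n] x)) :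
    i ∈ Set.Ico (f^[blockIndex f x n i] x) (f (f^[blockIndex f x n i] x)) := by
  refine ⟨iterate_blockIndex_le hi.1, ?_⟩
  rw [← Function.iterate_succ_apply' f]
  exact not_le.mp <| Nat.findGreatest_is_greatest (P := fun j => f^[j] x ≤ i)
    (Nat.lt_succ_self _) (blockIndex_lt hi.1 hi.2)

end BlockIndex

def fastGrowingDigits : ℕ → ℕ → ℕ → List ℕ
  | 0, _, _ => []
  | d + 1, b, i =>
    blockIndex (fastGrowing d) b b i ::
      fastGrowingDigits d ((fastGrowing d)^[blockIndex (fastGrowing d) b b i] b) i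

section FastGrowingDigits

lemma length_fastGrowingDigits (d b i : ℕ) : (fastGrowingDigits d b i).length = d := by
  induction d generalizing b with
  | zero => rfl
  | succ d ih => simp [fastGrowingDigits, ih]

lemma fastGrowingDigits_injOn (d b : ℕ) :
    Set.InjOn (fastGrowingDigits d b) (Set.Ico b (fastGrowing d b)) := by
  induction d generalizing b with
  | zero =>
    intro i hi i' hi' _
    simp only [fastGrowing, Set.mem_Ico] at hi hi'
    omega
  | succ d ih =>
    intro i hi i' hi' h
    simp only [fastGrowingDigits, List.cons.injEq] at h
    obtain ⟨hj, h⟩ := h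
    rw [hj] at h
    refine ih _ ?_ (mem_Ico_iterate_blockIndex hi') h
    rw [← hj]
    exact mem_Ico_iterate_blockIndex hi

lemma lt_of_prefix_fastGrowingDigits {d b i i' c : ℕ} {q : List ℕ} (hi : b ≤ i)
    (hi' : i' ∈ Set.Ico b (fastGrowing d b)) (hq : q <+: fastGrowingDigits d b i)
    (hqc : q ++ [c] <+: fastGrowingDigits d b i') : c < i := by
  induction d generalizing b q with
  | zero => simp [fastGrowingDigits] at hqc
  | succ d ih =>
    rcases q with _ | ⟨a, q⟩
    · simp only [fastGrowingDigits, List.nil_append, List.cons_prefix_cons] at hqc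
      rw [hqc.1]
      exact (blockIndex_lt hi'.1 hi'.2).trans_le hi
    · simp only [fastGrowingDigits, List.cons_append, List.cons_prefix_cons] at hq hqc
      obtain ⟨rfl, hq⟩ := hq
      obtain ⟨ha, hqc⟩ := hqc
      rw [← ha] at hqc
      refine ih (iterate_blockIndex_le hi) ?_ hq hqc
      rw [ha]
      exact mem_Ico_iterate_blockIndex hi'

end FastGrowingDigits

section Spine

open List

variable {k k' c : ℕ} {q t t' : List ℕ}

lemma replicate_append_cons_prefix (h : replicate k 0 ++ 1 :: t <+: replicate k' 0 ++ 1 :: t') :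
    k = k' ∧ t <+: t' := by
  induction k generalizing k' with
  | zero => cases k' <;> simp_all [replicate_succ]
  | succ k ih =>
    cases k' with
    | zero => simp_all [replicate_succ]
    | succ k' => simpa [replicate_succ] using ih (by simpa [replicate_succ] using h)

lemma append_singleton_prefix_replicate_append_cons (h : q ++ [c] <+: replicate k 0 ++ 1 :: t) :
    c ≤ 1 ∨ ∃ q', q = replicate k 0 ++ 1 :: q' ∧ q' ++ [c] <+: t := by
  induction k generalizing q with
  | zero =>
    rcases q with _ | ⟨a, q⟩ <;> simp_all
  | succ k ih =>
    rcases q with _ | ⟨a, q⟩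
    · simp_all [replicate_succ]
    · simp only [replicate_succ, cons_append, cons_prefix_cons] at h
      obtain ⟨rfl, h⟩ := h
      simpa [replicate_succ] using ih h

end Spine

noncomputable def leafBase (i : ℕ) : ℕ := uparrow 3 (alphaFn i - 1) 2

noncomputable def leafWord (i : ℕ) : List ℕ :=
  if i < 9 then [i]
  else List.replicate (alphaFn i) 0 ++ 1 :: fastGrowingDigits (alphaFn i) (leafBase i) i

section LeafWord

open List

variable {i j c : ℕ} {q : List ℕ}

lemma mem_Ico_leafBase (hi : 9 ≤ i) :
    i ∈ Set.Ico (leafBase i) (fastGrowing (alphaFn i) (leafBase i)) := by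
  have h2 := two_le_alphaFn hi
  refine ⟨uparrow_pred_alphaFn_le hi, (alphaFn_spec i).2.trans_le ?_⟩
  have := uparrow_three_succ_two_le_fastGrowing (k := alphaFn i - 1) (by omega)
  rwa [Nat.sub_add_cancel (by omega)] at this

lemma leafWord_of_lt (hi : i < 9) : leafWord i = [i] := if_pos hi

lemma leafWord_of_le (hi : 9 ≤ i) :
    leafWord i = replicate (alphaFn i) 0 ++ 1 :: fastGrowingDigits (alphaFn i) (leafBase i) i :=
  if_neg (by omega)

lemma length_leafWord_le : (leafWord i).length ≤ 2 * alphaFn i + 2 := by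
  rcases lt_or_ge i 9 with hi | hi
  · simp [leafWord_of_lt hi]
  · simp only [leafWord_of_le hi, length_append, length_replicate, length_cons,
      length_fastGrowingDigits]
    omega

lemma eq_of_leafWord_prefix (hi : 1 ≤ i) (h : leafWord i <+: leafWord j) : i = j := by
  rcases lt_or_ge i 9 with hi9 | hi9 <;> rcases lt_or_ge j 9 with hj9 | hj9
  · simpa [leafWord_of_lt hi9, leafWord_of_lt hj9] using h
  · obtain ⟨k, hk⟩ : ∃ k, alphaFn j = k + 1 :=
      ⟨alphaFn j - 1, by have := two_le_alphaFn hj9; omega⟩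
    rw [leafWord_of_lt hi9, leafWord_of_le hj9, hk] at h
    simp only [replicate_succ, cons_append, cons_prefix_cons, nil_prefix, and_true] at h
    omega
  · have := h.length_le
    rw [leafWord_of_le hi9, leafWord_of_lt hj9] at this
    simp only [length_append, length_replicate, length_cons, length_nil, zero_add] at this
    have := two_le_alphaFn hi9
    omega
  · rw [leafWord_of_le hi9, leafWord_of_le hj9] at h
    obtain ⟨hk, h⟩ := replicate_append_cons_prefix h
    have hb : leafBase i = leafBase j := by simp only [leafBase, hk]
    rw [hk, hb] at h
    refine fastGrowingDigits_injOn _ _ ?_ (mem_Ico_leafBase hj9) <|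
      h.eq_of_length (by simp [length_fastGrowingDigits])
    rw [← hk, ← hb]
    exact mem_Ico_leafBase hi9

lemma lt_max_of_prefix_leafWord (hq : q <+: leafWord i) (hqc : q ++ [c] <+: leafWord j) :
    c < max i 9 := by
  rcases lt_or_ge j 9 with hj9 | hj9
  · rw [leafWord_of_lt hj9] at hqc
    rcases q with _ | ⟨a, q⟩
    · simp only [nil_append, cons_prefix_cons, prefix_rfl, and_true] at hqc
      omega
    · simp at hqc
  rw [leafWord_of_le hj9] at hqc
  rcases append_singleton_prefix_replicate_append_cons hqc with hc | ⟨q', rfl, hdigits⟩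
  · omega
  rcases lt_or_ge i 9 with hi9 | hi9
  · have := hq.length_le
    rw [leafWord_of_lt hi9] at this
    simp only [length_append, length_replicate, length_cons, length_nil, zero_add] at this
    have := two_le_alphaFn hj9
    omega
  rw [leafWord_of_le hi9] at hq
  obtain ⟨hk, hq⟩ := replicate_append_cons_prefix hq
  have hb : leafBase j = leafBase i := by simp only [leafBase, hk]
  have hj := mem_Ico_leafBase hj9
  rw [hk, hb] at hj hdigits
  exact lt_max_of_lt_left <|
    lt_of_prefix_fastGrowingDigits (mem_Ico_leafBase hi9).1 hj hq hdigits

end LeafWord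

lemma List.dropLast_eq_and_ne_iff {α : Type*} {x y : List α} :
    x.dropLast = y ∧ x ≠ y ↔ ∃ c, x = y ++ [c] := by
  constructor
  · rintro ⟨rfl, hne⟩
    have hx : x ≠ [] := by rintro rfl; exact hne rfl
    exact ⟨x.getLast hx, (List.dropLast_append_getLast hx).symm⟩
  · rintro ⟨c, rfl⟩
    simp

namespace IndexTree

noncomputable def ofPrefixClosed (S : Finset (List ℕ)) (hnil : [] ∈ S)
    (hS : ∀ x ∈ S, x.dropLast ∈ S) : IndexTree where
  n := S.card
  npos := Finset.card_pos.mpr ⟨[], hnil⟩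
  root := S.equivFin ⟨[], hnil⟩
  parent v := S.equivFin ⟨(S.equivFin.symm v).1.dropLast, hS _ (S.equivFin.symm v).2⟩
  depth v := (S.equivFin.symm v).1.length
  parent_root := by simp
  depth_root := by simp
  depth_parent v hv := by
    have hne : (S.equivFin.symm v).1 ≠ [] := fun h => hv <| by
      rw [← S.equivFin.apply_symm_apply v]
      exact congrArg S.equivFin (Subtype.ext h)
    simp only [Equiv.symm_apply_apply, List.length_dropLast]
    have := List.length_pos_iff.mpr hne
    omega

/-- `S.equivFin`, retyped so that its values are nodes of `ofPrefixClosed S hnil hS`. -/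
noncomputable def nodeEquiv (S : Finset (List ℕ)) (hnil : [] ∈ S)
    (hS : ∀ x ∈ S, x.dropLast ∈ S) : S ≃ Fin (ofPrefixClosed S hnil hS).n :=
  S.equivFin

section OfPrefixClosed

variable {S : Finset (List ℕ)} {hnil : [] ∈ S} {hS : ∀ x ∈ S, x.dropLast ∈ S}

local notation "T" => ofPrefixClosed S hnil hS
local notation "e" => nodeEquiv S hnil hS

lemma ofPrefixClosed_parent (x : S) : (T).parent (e x) = e ⟨x.1.dropLast, hS _ x.2⟩ :=
  congrArg S.equivFin <| Subtype.ext <|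
    congrArg (fun y : S => y.1.dropLast) (S.equivFin.symm_apply_apply x)

lemma ofPrefixClosed_depth (x : S) : (T).depth (e x) = x.1.length :=
  congrArg (fun y : S => y.1.length) (S.equivFin.symm_apply_apply x)

lemma ofPrefixClosed_parent_eq_and_ne_iff (x y : S) :
    (T).parent (e x) = e y ∧ e x ≠ e y ↔ ∃ c, x.1 = y.1 ++ [c] := by
  rw [ofPrefixClosed_parent, ← List.dropLast_eq_and_ne_iff]
  exact and_congr ((e).apply_eq_iff_eq.trans Subtype.ext_iff)
    ((e).injective.ne_iff.trans Subtype.ext_iff.not)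

lemma ofPrefixClosed_isLeaf_iff (x : S) : (T).IsLeaf (e x) ↔ ∀ c, x.1 ++ [c] ∉ S := by
  constructor
  · intro h c hc
    have hchild := (ofPrefixClosed_parent_eq_and_ne_iff (hnil := hnil) (hS := hS)
      ⟨x.1 ++ [c], hc⟩ x).mpr ⟨c, rfl⟩
    exact hchild.2 (h _ hchild.1)
  · intro h u hu
    by_contra hne
    obtain ⟨y, rfl⟩ := (e).surjective u
    obtain ⟨c, hc⟩ := (ofPrefixClosed_parent_eq_and_ne_iff y x).mp ⟨hu, hne⟩
    exact h c (hc ▸ y.2)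

lemma ofPrefixClosed_numChildren_le (x : S) {N : ℕ} (hN : ∀ c, x.1 ++ [c] ∈ S → c < N) :
    (T).numChildren (e x) ≤ N := by
  have hchild (u : Fin (T).n) (hu : (T).parent u = e x ∧ u ≠ e x) :
      ∃ c, ((e).symm u).1 = x.1 ++ [c] := by
    rw [← (e).apply_symm_apply u] at hu
    exact (ofPrefixClosed_parent_eq_and_ne_iff _ x).mp hu
  refine (Finset.card_le_card_of_injOn (fun u => ((e).symm u).1.getLastD 0)
    (t := Finset.range N) ?_ ?_).trans (Finset.card_range N).le
  · intro u hu
    obtain ⟨c, hc⟩ := hchild u (Finset.mem_filter.mp hu).2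
    simpa [hc] using hN c (hc ▸ ((e).symm u).2)
  · intro u hu u' hu' h
    obtain ⟨c, hc⟩ := hchild u (Finset.mem_filter.mp hu).2
    obtain ⟨c', hc'⟩ := hchild u' (Finset.mem_filter.mp hu').2
    simp only [hc, hc', List.getLastD_concat] at h
    exact (e).symm.injective (Subtype.ext (hc.trans (h ▸ hc'.symm)))

lemma prefix_of_ofPrefixClosed_onRootPath {x y : S} (h : (T).OnRootPath (e x) (e y)) :
    x.1 <+: y.1 := by
  obtain ⟨t, ht⟩ := h
  induction t generalizing y with
  | zero => rw [(e).injective ht]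
  | succ t ih =>
    rw [Function.iterate_succ_apply, ofPrefixClosed_parent] at ht
    exact (ih ht).trans (List.dropLast_prefix _)

end OfPrefixClosed

theorem exists_of_prefixFree {ι : Type*} [Fintype ι] [Nonempty ι] (w : ι → List ℕ)
    (hw : ∀ i j, w i <+: w j → i = j) (N : ι → ℕ)
    (hN : ∀ i j q c, q <+: w i → q ++ [c] <+: w j → c < N i) :
    ∃ (T : IndexTree) (leaf : ι → Fin T.n), Function.Injective leaf ∧
      (∀ i, T.IsLeaf (leaf i)) ∧ (∀ v, T.IsLeaf v → ∃ i, leaf i = v) ∧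
      (∀ i, T.depth (leaf i) = (w i).length) ∧
      (∀ i v, T.OnRootPath v (leaf i) → T.numChildren v ≤ N i) := by
  classical
  set S : Finset (List ℕ) := Finset.univ.biUnion fun i => (w i).inits.toFinset
  have hmem (x : List ℕ) : x ∈ S ↔ ∃ i, x <+: w i := by simp [S, List.mem_inits]
  have hnil : [] ∈ S := (hmem []).2 ⟨Classical.arbitrary ι, List.nil_prefix⟩
  have hS : ∀ x ∈ S, x.dropLast ∈ S := fun x hx => by
    obtain ⟨i, hi⟩ := (hmem x).1 hx
    exact (hmem _).2 ⟨i, (List.dropLast_prefix x).trans hi⟩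
  set e := nodeEquiv S hnil hS
  set leaf : ι → Fin (ofPrefixClosed S hnil hS).n :=
    fun i => e ⟨w i, (hmem _).2 ⟨i, List.prefix_refl _⟩⟩
  refine ⟨ofPrefixClosed S hnil hS, leaf, ?_, ?_, ?_, fun i => ofPrefixClosed_depth _, ?_⟩
  · intro i j h
    have hw_eq : w i = w j := congrArg Subtype.val (e.injective h)
    exact hw i j (hw_eq ▸ List.prefix_refl _)
  · refine fun i => (ofPrefixClosed_isLeaf_iff _).2 fun c hc => ?_
    obtain ⟨j, hj⟩ := (hmem _).1 hc
    obtain rfl := hw i j ((List.prefix_append _ _).trans hj)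
    simpa using hj.length_le
  · intro v hv
    obtain ⟨x, rfl⟩ := e.surjective v
    obtain ⟨j, hj⟩ := (hmem _).1 x.2
    refine ⟨j, congrArg e (Subtype.ext ?_)⟩
    by_contra hne
    have hlt := hj.length_le.lt_of_ne fun hl => hne (hj.eq_of_length hl).symm
    exact (ofPrefixClosed_isLeaf_iff x).1 hv _ ((hmem _).2 ⟨j, List.concat_get_prefix hj hlt⟩)
  · intro i v hv
    obtain ⟨x, rfl⟩ := e.surjective v
    refine ofPrefixClosed_numChildren_le x fun c hc => ?_
    obtain ⟨j, hj⟩ := (hmem _).1 hc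
    exact hN i j _ c (prefix_of_ofPrefixClosed_onRootPath hv) hj

end IndexTree

/-- Weak index-tree lemma: for every `m ≥ 1` there is a rooted tree with exactly `m`
leaves, labeled `1` through `m`, such that (1) the `i`-th leaf has depth at most
`C·α(i) + C` for an absolute constant `C`, and (2) every node on the root-to-leaf
path of the `i`-th leaf has at most `max i 9` children. -/
theorem weak_index_tree :
    ∃ C : ℕ, ∀ m : ℕ, 1 ≤ m →
      ∃ (T : IndexTree) (leaf : Fin m → Fin T.n),
        Function.Injective leaf ∧
        (∀ i, T.IsLeaf (leaf i)) ∧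
        (∀ v, T.IsLeaf v → ∃ i, leaf i = v) ∧
        (∀ i : Fin m, T.depth (leaf i) ≤ C * alphaFn (i.1 + 1) + C) ∧
        (∀ i : Fin m, ∀ v, T.OnRootPath v (leaf i) →
          T.numChildren v ≤ max (i.1 + 1) 9) := by
  refine ⟨2, fun m hm => ?_⟩
  have : Nonempty (Fin m) := ⟨⟨0, hm⟩⟩
  obtain ⟨T, leaf, hinj, hleaf, hlabel, hdepth, hchildren⟩ :=
    IndexTree.exists_of_prefixFree (fun i : Fin m => leafWord (i.1 + 1))
      (fun i j h => Fin.ext (by simpa using eq_of_leafWord_prefix (by omega) h))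
      (fun i => max (i.1 + 1) 9) (fun _ _ _ _ hq hqc => lt_max_of_prefix_leafWord hq hqc)
  exact ⟨T, leaf, hinj, hleaf, hlabel,
    fun i => (hdepth i).trans_le length_leafWord_le, hchildren⟩
end

section
/- Let T be a rooted tree in which every leaf has depth at most d and every internal node has at most n children, with n ≥ 4. Then there exists a rooted tree T' with the same leaf set such that every leaf has depth at most 2d and every internal node has at most 3·⌈√n⌉ children. -/
/-- `⌈√n⌉`, the least integer whose square is at least `n`. -/
def ceilSqrt (n : ℕ) : ℕ :=
  if Nat.sqrt n * Nat.sqrt n = n then Nat.sqrt n else Nat.sqrt n + 1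

/-! It suffices to compare numbers of leaves. Every node of depth `k + 1` is a child of an
internal node of depth `k`, so the nodes of depth `k` together with the leaves of smaller depth
number at most `n ^ k`; hence `T` has at most `n ^ d ≤ ⌈√n⌉ ^ (2d)` leaves. Conversely, any
`L ≤ B ^ D` leaves `0, …, L - 1` are the leaves of a tree of depth `D` and fan-out `B`, whose
nodes at depth `t` are the blocks of leaves with a common quotient by `B ^ (D - t)`. -/

open Finset

namespace IndexTree

variable (T : IndexTree)

lemma eq_root_of_depth_eq_zero {v : Fin T.n} (h : T.depth v = 0) : v = T.root := by
  by_contra hv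
  have := T.depth_parent v hv
  omega

lemma depth_eq_succ_of_parent_eq {u v : Fin T.n} (huv : T.parent u = v) (hne : u ≠ v) :
    T.depth u = T.depth v + 1 := by
  have hu : u ≠ T.root := by
    rintro rfl
    exact hne (T.parent_root ▸ huv)
  rw [T.depth_parent u hu, huv]

lemma not_isLeaf_parent {v : Fin T.n} (hv : v ≠ T.root) : ¬ T.IsLeaf (T.parent v) := fun h => by
  have := T.depth_parent v hv
  rw [← h v rfl] at this
  omega

lemma exists_isLeaf : ∃ v, T.IsLeaf v := by
  obtain ⟨v, -, hv⟩ := univ.exists_max_image T.depth ⟨⟨0, T.npos⟩, mem_univ _⟩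
  refine ⟨v, fun u hu => by_contra fun hne => ?_⟩
  have := hv u (mem_univ u)
  have := T.depth_eq_succ_of_parent_eq hu hne
  omega

section LeafCount

open Classical

noncomputable def frontier (k : ℕ) : Finset (Fin T.n) :=
  {v | T.depth v = k ∨ (T.IsLeaf v ∧ T.depth v < k)}

lemma card_frontier_zero_le : #(T.frontier 0) ≤ 1 := by
  refine card_le_one.mpr fun a ha b hb => ?_
  simp only [frontier, mem_filter, mem_univ, true_and, Nat.not_lt_zero,
    and_false, or_false] at ha hb
  rw [T.eq_root_of_depth_eq_zero ha, T.eq_root_of_depth_eq_zero hb]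

lemma card_frontier_succ_le {n : ℕ} (hn : 1 ≤ n)
    (hchild : ∀ v, ¬ T.IsLeaf v → T.numChildren v ≤ n) (k : ℕ) :
    #(T.frontier (k + 1)) ≤ n * #(T.frontier k) := by
  set F := T.frontier k
  set deep : Finset (Fin T.n) := {v | T.depth v = k + 1}
  have hsub : T.frontier (k + 1) ⊆ {v ∈ F | T.IsLeaf v} ∪ deep := by
    intro v hv
    simp only [F, deep, frontier, mem_union, mem_filter, mem_univ,
      true_and] at hv ⊢
    rcases hv with h | ⟨hleaf, h⟩
    · exact Or.inr h
    · rcases Nat.lt_succ_iff_lt_or_eq.mp h with h | h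
      exacts [Or.inl ⟨Or.inr ⟨hleaf, h⟩, hleaf⟩, Or.inl ⟨Or.inl h, hleaf⟩]
  have hdeep : #deep ≤ n * #{v ∈ F | ¬ T.IsLeaf v} := by
    refine card_le_mul_card_image_of_maps_to (f := T.parent) (fun v hv => ?_) n
      fun p hp => ?_
    · simp only [deep, F, frontier, mem_filter, mem_univ, true_and] at hv ⊢
      have hv0 : v ≠ T.root := fun h => by rw [h, T.depth_root] at hv; omega
      have := T.depth_parent v hv0
      exact ⟨Or.inl (by omega), T.not_isLeaf_parent hv0⟩
    · obtain ⟨hpF, hpl⟩ := mem_filter.mp hp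
      have hpk : T.depth p = k := by
        simp only [F, frontier, mem_filter, mem_univ, true_and] at hpF
        tauto
      refine (card_le_card fun u hu => ?_).trans (hchild p hpl)
      simp only [deep, mem_filter, mem_univ, true_and] at hu ⊢
      exact ⟨hu.2, fun h => by rw [h] at hu; omega⟩
  calc #(T.frontier (k + 1)) ≤ #{v ∈ F | T.IsLeaf v} + #deep :=
        (card_le_card hsub).trans (card_union_le _ _)
    _ ≤ n * #{v ∈ F | T.IsLeaf v} + n * #{v ∈ F | ¬ T.IsLeaf v} :=
        add_le_add (Nat.le_mul_of_pos_left _ hn) hdeep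
    _ = n * #F := by rw [← mul_add, card_filter_add_card_filter_not]

lemma card_frontier_le {n : ℕ} (hn : 1 ≤ n)
    (hchild : ∀ v, ¬ T.IsLeaf v → T.numChildren v ≤ n) (k : ℕ) :
    #(T.frontier k) ≤ n ^ k := by
  induction k with
  | zero => simpa using T.card_frontier_zero_le
  | succ k ih =>
    calc #(T.frontier (k + 1)) ≤ n * #(T.frontier k) := T.card_frontier_succ_le hn hchild k
      _ ≤ n * n ^ k := Nat.mul_le_mul_left n ih
      _ = n ^ (k + 1) := (pow_succ' n k).symm

lemma card_leaves_le {n d : ℕ} (hn : 1 ≤ n)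
    (hchild : ∀ v, ¬ T.IsLeaf v → T.numChildren v ≤ n)
    (hdepth : ∀ v, T.IsLeaf v → T.depth v ≤ d) :
    Nat.card {v // T.IsLeaf v} ≤ n ^ d := by
  calc Nat.card {v // T.IsLeaf v} = #{v | T.IsLeaf v} := Nat.subtype_card _ (by simp)
    _ ≤ #(T.frontier d) := card_le_card fun v hv => by
        simp only [frontier, mem_filter, mem_univ, true_and] at hv ⊢
        have := hdepth v hv
        rcases this.lt_or_eq with h | h
        exacts [Or.inr ⟨hv, h⟩, Or.inl h]
    _ ≤ n ^ d := T.card_frontier_le hn hchild d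

end LeafCount

section Transfer

variable {S : Type*} (e : S ≃ Fin T.n) {parent : S → S}

lemma isLeaf_apply_iff (he : ∀ s, T.parent (e s) = e (parent s)) (s : S) :
    T.IsLeaf (e s) ↔ ∀ u, parent u = s → u = s := by
  rw [IsLeaf, e.symm.forall_congr_left]
  simp only [Equiv.symm_symm, he, e.apply_eq_iff_eq]

lemma numChildren_apply [Fintype S] [DecidableEq S] (he : ∀ s, T.parent (e s) = e (parent s))
    (s : S) : T.numChildren (e s) = #{u | parent u = s ∧ u ≠ s} := by
  refine card_nbij' e.symm e (fun u hu => ?_) (fun u hu => ?_) (fun u _ => by simp)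
    (fun u _ => by simp)
  · obtain ⟨u, rfl⟩ := e.surjective u
    simp_all
  · simp_all

end Transfer

noncomputable def ofFintype {S : Type*} [Fintype S] (root : S) (parent : S → S)
    (depth : S → ℕ) (parent_root : parent root = root) (depth_root : depth root = 0)
    (depth_parent : ∀ v, v ≠ root → depth v = depth (parent v) + 1) : IndexTree where
  n := Fintype.card S
  npos := Fintype.card_pos_iff.mpr ⟨root⟩
  root := Fintype.equivFin S root
  parent v := Fintype.equivFin S (parent ((Fintype.equivFin S).symm v))
  depth v := depth ((Fintype.equivFin S).symm v)
  parent_root := by simp [parent_root]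
  depth_root := by simp [depth_root]
  depth_parent v hv := by
    simp only [Equiv.symm_apply_apply]
    exact depth_parent _ fun h => hv (by simp [← h])

end IndexTree

section BlockTree

variable {L B D : ℕ}

variable (L B D) in
/-- Leaves are `0, …, L - 1`; the node `(t, m)` at depth `t` is the block of leaves `j` with
`j / B ^ (D - t) = m` (nonempty iff `m * B ^ (D - t) < L`), so that its parent is
`(t - 1, m / B)`. -/
def blockNodes : Finset (ℕ × ℕ) :=
  {p ∈ range (D + 1) ×ˢ range L | p.2 * B ^ (D - p.1) < L}

lemma mem_blockNodes {p : ℕ × ℕ} :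
    p ∈ blockNodes L B D ↔ p.1 ≤ D ∧ p.2 < L ∧ p.2 * B ^ (D - p.1) < L := by
  simp [blockNodes, and_assoc]

def blockRoot (hL : 0 < L) : blockNodes L B D :=
  ⟨(0, 0), mem_blockNodes.mpr ⟨Nat.zero_le D, hL, by simpa⟩⟩

def blockParent (p : blockNodes L B D) : blockNodes L B D :=
  ⟨(p.1.1 - 1, p.1.2 / B), by
    obtain ⟨ht, hm, hmL⟩ := mem_blockNodes.mp p.2
    refine mem_blockNodes.mpr
      ⟨by omega, (Nat.div_le_self _ _).trans_lt hm, lt_of_le_of_lt ?_ hmL⟩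
    rcases Nat.eq_zero_or_pos p.1.1 with ht0 | ht0
    · simpa [ht0] using Nat.mul_le_mul_right _ (Nat.div_le_self p.1.2 B)
    · rw [show D - (p.1.1 - 1) = D - p.1.1 + 1 by omega, pow_succ', ← mul_assoc]
      exact Nat.mul_le_mul_right _ (Nat.div_mul_le_self _ _)⟩

lemma blockParent_blockRoot (hL : 0 < L) :
    blockParent (blockRoot hL : blockNodes L B D) = blockRoot hL := by
  simp [blockParent, blockRoot]

lemma eq_blockRoot_of_fst_eq_zero (hL : 0 < L) (hLB : L ≤ B ^ D) {p : blockNodes L B D}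
    (hp : p.1.1 = 0) : p = blockRoot hL := by
  have hmL := (mem_blockNodes.mp p.2).2.2
  rw [hp, Nat.sub_zero] at hmL
  have hm : p.1.2 = 0 := by
    by_contra hm
    exact (hmL.trans_le hLB).not_ge (Nat.le_mul_of_pos_left _ (Nat.pos_of_ne_zero hm))
  exact Subtype.ext (Prod.ext hp hm)

lemma fst_eq_succ_of_blockParent_eq (hL : 0 < L) (hLB : L ≤ B ^ D) {u p : blockNodes L B D}
    (hup : blockParent u = p) (hne : u ≠ p) : u.1.1 = p.1.1 + 1 ∧ u.1.2 / B = p.1.2 := by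
  have hu0 : u.1.1 ≠ 0 := fun h => by
    rw [eq_blockRoot_of_fst_eq_zero hL hLB h, blockParent_blockRoot] at hup
    exact hne (by rw [← hup, eq_blockRoot_of_fst_eq_zero hL hLB h])
  rw [← hup]
  exact ⟨show u.1.1 = u.1.1 - 1 + 1 by omega, rfl⟩

lemma isLeaf_blockParent_iff (hL : 0 < L) (hB : 0 < B) (hLB : L ≤ B ^ D)
    (p : blockNodes L B D) : (∀ u, blockParent u = p → u = p) ↔ p.1.1 = D := by
  obtain ⟨ht, -, hmL⟩ := mem_blockNodes.mp p.2
  refine ⟨fun hleaf => by_contra fun htD => ?_, fun htD u hup => by_contra fun hne => ?_⟩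
  · have hchild_mem : (p.1.1 + 1, p.1.2 * B) ∈ blockNodes L B D := by
      have hpow : p.1.2 * B * B ^ (D - (p.1.1 + 1)) = p.1.2 * B ^ (D - p.1.1) := by
        rw [mul_assoc, ← pow_succ']
        congr 2
        omega
      refine mem_blockNodes.mpr ⟨by omega, lt_of_le_of_lt ?_ hmL, hpow ▸ hmL⟩
      rw [← hpow]
      exact Nat.le_mul_of_pos_right _ (pow_pos hB _)
    have hchild := hleaf ⟨_, hchild_mem⟩ (Subtype.ext (Prod.ext (by simp [blockParent])
      (by simp [blockParent, Nat.mul_div_cancel _ hB])))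
    exact absurd (congrArg (·.1.1) hchild) (by simp)
  · have := (fst_eq_succ_of_blockParent_eq hL hLB hup hne).1
    have := (mem_blockNodes.mp u.2).1
    omega

lemma card_children_blockParent_le (hL : 0 < L) (hB : 0 < B) (hLB : L ≤ B ^ D)
    (p : blockNodes L B D) : #{u | blockParent u = p ∧ u ≠ p} ≤ B := by
  refine (card_le_card_of_injOn (fun u => u.1.2 % B) (t := range B)
    (fun u _ => mem_range.mpr (Nat.mod_lt _ hB)) fun u hu w hw huw => ?_).trans_eq
    (card_range B)
  simp only [coe_filter, mem_univ, true_and] at hu hw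
  obtain ⟨hu1, hu2⟩ := fst_eq_succ_of_blockParent_eq hL hLB hu.1 hu.2
  obtain ⟨hw1, hw2⟩ := fst_eq_succ_of_blockParent_eq hL hLB hw.1 hw.2
  refine Subtype.ext (Prod.ext (hu1.trans hw1.symm) ?_)
  rw [← Nat.div_add_mod u.1.2 B, ← Nat.div_add_mod w.1.2 B, hu2, hw2]
  exact congrArg _ huw

lemma card_blockNodes_fst_eq : Nat.card {p : blockNodes L B D // p.1.1 = D} = L := by
  refine (Nat.card_congr ?_).trans (Nat.card_fin L)
  exact
    { toFun p := ⟨p.1.1.2, (mem_blockNodes.mp p.1.2).2.1⟩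
      invFun j := ⟨⟨(D, j), mem_blockNodes.mpr ⟨le_rfl, j.2, by simp⟩⟩, rfl⟩
      left_inv p := Subtype.ext (Subtype.ext (Prod.ext p.2.symm rfl))
      right_inv j := rfl }

end BlockTree

theorem IndexTree.exists_card_leaves_eq {L B D : ℕ} (hL : 0 < L) (hB : 0 < B)
    (hLB : L ≤ B ^ D) :
    ∃ T : IndexTree, Nat.card {v // T.IsLeaf v} = L ∧ (∀ v, T.depth v ≤ D) ∧
      ∀ v, T.numChildren v ≤ B := by
  let T := ofFintype (blockRoot hL) blockParent (fun p : blockNodes L B D => p.1.1)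
    (blockParent_blockRoot hL) rfl fun p hp => by
      have := mt (eq_blockRoot_of_fst_eq_zero hL hLB) hp
      simp only [blockParent]
      omega
  let e : blockNodes L B D ≃ Fin T.n := Fintype.equivFin _
  have he (p) : T.parent (e p) = e (blockParent p) :=
    congrArg (fun q => e (blockParent q)) (e.symm_apply_apply p)
  have hdepth (p) : T.depth (e p) = p.1.1 := congrArg (fun q => q.1.1) (e.symm_apply_apply p)
  refine ⟨T, ?_, fun v => ?_, fun v => ?_⟩
  · refine (Nat.card_congr (e.subtypeEquiv fun p => ?_).symm).trans card_blockNodes_fst_eq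
    exact ((T.isLeaf_apply_iff e he p).trans (isLeaf_blockParent_iff hL hB hLB p)).symm
  · obtain ⟨p, rfl⟩ := e.surjective v
    exact hdepth p ▸ (mem_blockNodes.mp p.2).1
  · obtain ⟨p, rfl⟩ := e.surjective v
    rw [T.numChildren_apply e he]
    exact card_children_blockParent_le hL hB hLB p

lemma le_ceilSqrt_sq (n : ℕ) : n ≤ ceilSqrt n ^ 2 := by
  unfold ceilSqrt
  split_ifs with h
  · rw [sq, h]
  · exact (Nat.lt_succ_sqrt' n).le

/-- Subdivision step: if in a rooted tree every leaf has depth at most `d` and every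
internal node has at most `n ≥ 4` children, then there is a rooted tree with the
same leaf set in which every leaf has depth at most `2d` and every internal node
has at most `3·⌈√n⌉` children. -/
theorem subdivision_step (T : IndexTree) (d n : ℕ) (hn : 4 ≤ n)
    (hdepth : ∀ v, T.IsLeaf v → T.depth v ≤ d)
    (hchild : ∀ v, ¬ T.IsLeaf v → T.numChildren v ≤ n) :
    ∃ T' : IndexTree,
      Nonempty ({v : Fin T.n // T.IsLeaf v} ≃ {v : Fin T'.n // T'.IsLeaf v}) ∧
      (∀ v, T'.IsLeaf v → T'.depth v ≤ 2 * d) ∧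
      (∀ v, ¬ T'.IsLeaf v → T'.numChildren v ≤ 3 * ceilSqrt n) := by
  have hsq := le_ceilSqrt_sq n
  have hB : 0 < ceilSqrt n := Nat.pos_of_ne_zero fun h => by simp [h] at hsq; omega
  have hL : 0 < Nat.card {v // T.IsLeaf v} := by
    obtain ⟨v, hv⟩ := T.exists_isLeaf
    exact Nat.card_pos_iff.mpr ⟨⟨⟨v, hv⟩⟩, inferInstance⟩
  have hLB : Nat.card {v // T.IsLeaf v} ≤ ceilSqrt n ^ (2 * d) :=
    calc Nat.card {v // T.IsLeaf v} ≤ n ^ d := T.card_leaves_le (by omega) hchild hdepth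
      _ ≤ (ceilSqrt n ^ 2) ^ d := Nat.pow_le_pow_left hsq d
      _ = ceilSqrt n ^ (2 * d) := (pow_mul _ 2 d).symm
  obtain ⟨T', hcard, hdepth', hchild'⟩ := IndexTree.exists_card_leaves_eq hL hB hLB
  exact ⟨T', Finite.card_eq.mp hcard.symm, fun v _ => hdepth' v,
    fun v _ => (hchild' v).trans (by omega)⟩
end

section
/- Suppose buckets satisfy the size invariant |H_i| ≤ 2^⌊i/2⌋ and the age invariant Γ(x) ≥ Σ_{j < i, j non-vacant} 2^⌊j/2⌋ for x ∈ H_i. If H_{2i+2} is vacant and H_{2i}, H_{2i+1} are non-vacant, then melding H_{2i} and H_{2i+1} into bucket position 2i+2 (making positions 2i and 2i+1 vacant) preserves both the size invariant and the age invariant. -/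
/-- The size invariant: a non-vacant bucket at position `i` has at most `2^⌊i/2⌋`
elements. Vacant positions hold `none`. -/
def SizeInv {X : Type*} (H : ℕ → Option (Finset X)) : Prop :=
  ∀ i B, H i = some B → B.card ≤ 2 ^ (i / 2)

/-- The age invariant: every element `x` of the bucket at position `i` has age at
least the sum of the maximum sizes `2^⌊j/2⌋` over non-vacant positions `j < i`. -/
def AgeInv {X : Type*} (Γ : X → ℕ) (H : ℕ → Option (Finset X)) : Prop :=
  ∀ i B x, H i = some B → x ∈ B →
    (∑ j ∈ Finset.range i, if (H j).isSome then 2 ^ (j / 2) else 0) ≤ Γ x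

/-!
Away from positions `2i`, `2i+1`, `2i+2` nothing changes, so only the prefix weight sums
`∑_{j<k} 2^⌊j/2⌋ [H_j non-vacant]` need care. The meld removes weight `2^i + 2^i` at positions
`2i, 2i+1` and adds `2^(i+1)` at `2i+2`: every prefix sum can only drop, and the merged bucket
sees the prefix of `H_{2i}`, which bounds the ages of both `H_{2i}` and `H_{2i+1}`.
-/

open Finset

theorem Finset.sum_range_le_sum_range_of_le_of_ne {M : Type*} [AddCommMonoid M] [PartialOrder M]
    [IsOrderedAddMonoid M] {f g : ℕ → M} {n : ℕ} (hne : ∀ j, j ≠ n → f j ≤ g j)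
    (hn : ∑ j ∈ range (n + 1), f j ≤ ∑ j ∈ range (n + 1), g j) (k : ℕ) :
    ∑ j ∈ range k, f j ≤ ∑ j ∈ range k, g j := by
  rcases le_or_gt k n with hk | hk
  · exact sum_le_sum fun j hj => hne j (by simp at hj; omega)
  · induction k, hk using Nat.le_induction with
    | base => exact hn
    | succ k hk ih =>
      rw [sum_range_succ, sum_range_succ]
      exact add_le_add ih (hne k (by omega))

section Meld

variable {X : Type*}

def bucketWeight (H : ℕ → Option (Finset X)) (j : ℕ) : ℕ :=
  if (H j).isSome then 2 ^ (j / 2) else 0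

def meld (H : ℕ → Option (Finset X)) (i : ℕ) (B : Finset X) : ℕ → Option (Finset X) :=
  fun j => if j = 2 * i + 2 then some B else if j = 2 * i ∨ j = 2 * i + 1 then none else H j

variable {H : ℕ → Option (Finset X)} {i : ℕ} {B : Finset X}

theorem meld_eq_some {j : ℕ} {C : Finset X} (h : meld H i B j = some C) :
    j = 2 * i + 2 ∧ C = B ∨ H j = some C := by
  unfold meld at h
  split_ifs at h <;> simp_all

theorem meld_of_lt {j : ℕ} (hj : j < 2 * i) : meld H i B j = H j := by
  simp only [meld]
  rw [if_neg (by omega), if_neg (by omega)]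

theorem bucketWeight_meld_le {j : ℕ} (hj : j ≠ 2 * i + 2) :
    bucketWeight (meld H i B) j ≤ bucketWeight H j := by
  unfold bucketWeight meld
  split_ifs <;> simp_all

theorem sum_range_bucketWeight_meld_two_mul :
    ∑ j ∈ range (2 * i), bucketWeight (meld H i B) j =
      ∑ j ∈ range (2 * i), bucketWeight H j :=
  sum_congr rfl fun j hj => by rw [bucketWeight, meld_of_lt (mem_range.mp hj), bucketWeight]

theorem sum_range_bucketWeight_meld_two_mul_add_two :
    ∑ j ∈ range (2 * i + 2), bucketWeight (meld H i B) j =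
      ∑ j ∈ range (2 * i), bucketWeight H j := by
  rw [sum_range_succ, sum_range_succ, sum_range_bucketWeight_meld_two_mul]
  simp [bucketWeight, meld]

theorem sum_range_bucketWeight_meld_le (h0 : (H (2 * i)).isSome) (h1 : (H (2 * i + 1)).isSome)
    (k : ℕ) :
    ∑ j ∈ range k, bucketWeight (meld H i B) j ≤ ∑ j ∈ range k, bucketWeight H j := by
  refine sum_range_le_sum_range_of_le_of_ne (n := 2 * i + 2) (fun j => bucketWeight_meld_le) ?_ k
  rw [sum_range_succ, sum_range_bucketWeight_meld_two_mul_add_two, sum_range_succ,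
    sum_range_succ, sum_range_succ, add_assoc, add_assoc]
  apply Nat.add_le_add_left
  simp [bucketWeight, meld, h0, h1, show (2 * i + 1) / 2 = i by omega, pow_succ]
  omega

variable [DecidableEq X] {B₁ B₂ : Finset X}

theorem sizeInv_meld (hsize : SizeInv H) (h0 : H (2 * i) = some B₁)
    (h1 : H (2 * i + 1) = some B₂) : SizeInv (meld H i (B₁ ∪ B₂)) := by
  intro j C hC
  obtain ⟨rfl, rfl⟩ | hC := meld_eq_some hC
  · have hB₁ := hsize _ _ h0
    have hB₂ := hsize _ _ h1
    rw [show (2 * i) / 2 = i by omega] at hB₁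
    rw [show (2 * i + 1) / 2 = i by omega] at hB₂
    calc (B₁ ∪ B₂).card ≤ B₁.card + B₂.card := card_union_le _ _
      _ ≤ 2 ^ i + 2 ^ i := add_le_add hB₁ hB₂
      _ = 2 ^ ((2 * i + 2) / 2) := by
        rw [show (2 * i + 2) / 2 = i + 1 by omega, pow_succ, mul_two]
  · exact hsize j C hC

theorem ageInv_meld {Γ : X → ℕ} (hage : AgeInv Γ H) (h0 : H (2 * i) = some B₁)
    (h1 : H (2 * i + 1) = some B₂) : AgeInv Γ (meld H i (B₁ ∪ B₂)) := by
  intro j C x hC hx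
  change ∑ j ∈ range j, bucketWeight (meld H i (B₁ ∪ B₂)) j ≤ Γ x
  obtain ⟨rfl, rfl⟩ | hC := meld_eq_some hC
  · rw [sum_range_bucketWeight_meld_two_mul_add_two]
    rcases mem_union.mp hx with hx | hx
    · exact hage _ _ x h0 hx
    · calc ∑ j ∈ range (2 * i), bucketWeight H j
          ≤ ∑ j ∈ range (2 * i + 1), bucketWeight H j :=
            sum_le_sum_of_subset (range_subset_range.mpr (Nat.le_succ _))
        _ ≤ Γ x := hage _ _ x h1 hx
  · exact (sum_range_bucketWeight_meld_le (by simp [h0]) (by simp [h1]) j).trans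
      (hage j C x hC hx)

end Meld

theorem meld_preserves_invariants_general {X : Type*} [DecidableEq X]
    (H : ℕ → Option (Finset X)) (Γ : X → ℕ) (i : ℕ) (B₁ B₂ : Finset X)
    (h0 : H (2 * i) = some B₁) (h1 : H (2 * i + 1) = some B₂)
    (hsize : SizeInv H) (hage : AgeInv Γ H) :
    SizeInv (fun j => if j = 2 * i + 2 then some (B₁ ∪ B₂)
      else if j = 2 * i ∨ j = 2 * i + 1 then none else H j) ∧
    AgeInv Γ (fun j => if j = 2 * i + 2 then some (B₁ ∪ B₂)
      else if j = 2 * i ∨ j = 2 * i + 1 then none else H j) :=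
  ⟨sizeInv_meld hsize h0 h1, ageInv_meld hage h0 h1⟩

/-- If `H_(2i+2)` is vacant and `H_(2i)`, `H_(2i+1)` are non-vacant, then melding
`H_(2i)` and `H_(2i+1)` into position `2i+2` (making positions `2i` and `2i+1`
vacant) preserves both the size invariant and the age invariant. -/
theorem meld_preserves_invariants {X : Type*} [DecidableEq X]
    (H : ℕ → Option (Finset X)) (Γ : X → ℕ) (i : ℕ) (B₁ B₂ : Finset X)
    (h0 : H (2 * i) = some B₁) (h1 : H (2 * i + 1) = some B₂)
    (h2 : H (2 * i + 2) = none)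
    (hsize : SizeInv H) (hage : AgeInv Γ H) :
    SizeInv (fun j => if j = 2 * i + 2 then some (B₁ ∪ B₂)
      else if j = 2 * i ∨ j = 2 * i + 1 then none else H j) ∧
    AgeInv Γ (fun j => if j = 2 * i + 2 then some (B₁ ∪ B₂)
      else if j = 2 * i ∨ j = 2 * i + 1 then none else H j) :=
  meld_preserves_invariants_general H Γ i B₁ B₂ h0 h1 hsize hage
end

section
/- Consider a counter over bucket positions where each non-vacant position i carries potential c·i² for a constant c > 0, and a Push operation that makes position 0 vacant by a cascade: repeatedly either moving a bucket from position 2i to vacant position 2i+1, or melding positions 2i and 2i+1 into position 2i+2, where a cascade reaching maximum index ℓ costs at most c'·ℓ² actual work. Then over any sequence of n Push operations starting from the all-vacant state, the total actual work is O(n). -/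
/-- `Cascade i S S' ℓ` : starting from the set `S` of non-vacant positions, the
procedure ensuring that position `2i` is vacant transforms `S` into `S'`, reaching
maximum index `ℓ`. It either does nothing (position `2i` already vacant), moves the
bucket from position `2i` to the vacant position `2i+1`, or recursively ensures
position `2i+2` is vacant and melds positions `2i` and `2i+1` into `2i+2`. -/
inductive Cascade : ℕ → Finset ℕ → Finset ℕ → ℕ → Prop
  | done (i : ℕ) (S : Finset ℕ) (h : 2 * i ∉ S) : Cascade i S S (2 * i)
  | move (i : ℕ) (S : Finset ℕ) (h : 2 * i ∈ S) (h' : 2 * i + 1 ∉ S) :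
      Cascade i S (insert (2 * i + 1) (S.erase (2 * i))) (2 * i + 1)
  | meld (i : ℕ) (S S' : Finset ℕ) (ℓ : ℕ) (h : 2 * i ∈ S) (h' : 2 * i + 1 ∈ S)
      (hc : Cascade (i + 1) S S' ℓ) :
      Cascade i S (insert (2 * i + 2) ((S'.erase (2 * i)).erase (2 * i + 1))) ℓ

/-- A Push operation: make position `0` vacant by a cascade, then occupy position
`0` with the new singleton bucket. -/
def PushStep (S S' : Finset ℕ) (ℓ : ℕ) : Prop :=
  ∃ S'', Cascade 0 S S'' ℓ ∧ S' = insert 0 S''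

/-!
Each position `i` carries potential `w i` (here `c·i²`). A meld at level `i` trades
positions `2i, 2i+1` for `2i+2` and so releases about `4c·i²`, while a cascade reaching
level `i` costs only `O(i²)`; summing the released potential over the melds of a cascade
pays for it up to a constant budget, and the budgets of `n` Pushes telescope to `O(n)`.
-/

open Finset

/-- `g i` bounds the amortized cost of a cascade started at level `i`. -/
structure CascadeBudget (w cost g : ℕ → ℕ) : Prop where
  done : ∀ i, cost (2 * i) ≤ g i
  move : ∀ i, w (2 * i + 1) + cost (2 * i + 1) ≤ g i + w (2 * i)
  meld : ∀ i, g (i + 1) + w (2 * i + 2) ≤ g i + w (2 * i) + w (2 * i + 1)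

namespace Cascade

variable {i : ℕ} {S S' : Finset ℕ} {ℓ : ℕ}

theorem two_mul_notMem (h : Cascade i S S' ℓ) : 2 * i ∉ S' := by
  cases h with
  | done _ _ h => exact h
  | move => simp
  | meld => simp

theorem mem_iff_of_lt (h : Cascade i S S' ℓ) {j : ℕ} (hj : j < 2 * i) : j ∈ S' ↔ j ∈ S := by
  induction h generalizing j with
  | done => rfl
  | move i S =>
    simp [show j ≠ 2 * i + 1 by omega, show j ≠ 2 * i by omega]
  | meld i S S' ℓ _ _ _ ih =>
    simp [show j ≠ 2 * i + 2 by omega, show j ≠ 2 * i + 1 by omega, show j ≠ 2 * i by omega,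
      ih (show j < 2 * (i + 1) by omega)]

theorem sum_add_cost_le {w cost g : ℕ → ℕ} (hg : CascadeBudget w cost g)
    (h : Cascade i S S' ℓ) : ∑ j ∈ S', w j + cost ℓ ≤ ∑ j ∈ S, w j + g i := by
  induction h with
  | done i S _ => linarith [hg.done i]
  | move i S h2i h2i1 =>
    rw [sum_insert fun hmem => h2i1 (mem_of_mem_erase hmem), ← add_sum_erase S w h2i]
    linarith [hg.move i]
  | meld i S S' ℓ h2i h2i1 hc ih =>
    have h2i' : 2 * i ∈ S' := (hc.mem_iff_of_lt (by omega)).2 h2i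
    have h2i1' : 2 * i + 1 ∈ S'.erase (2 * i) :=
      mem_erase.2 ⟨by omega, (hc.mem_iff_of_lt (by omega)).2 h2i1⟩
    have h2i2 : 2 * i + 2 ∉ (S'.erase (2 * i)).erase (2 * i + 1) := fun hmem =>
      hc.two_mul_notMem (by simpa [Nat.mul_succ] using mem_of_mem_erase (mem_of_mem_erase hmem))
    rw [sum_insert h2i2, ← add_sum_erase S' w h2i', ← add_sum_erase _ w h2i1'] at *
    linarith [hg.meld i]

end Cascade

theorem PushStep.sum_add_cost_le {w cost g : ℕ → ℕ} (hg : CascadeBudget w cost g)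
    {S S' : Finset ℕ} {ℓ : ℕ} (h : PushStep S S' ℓ) :
    ∑ j ∈ S', w j + cost ℓ ≤ ∑ j ∈ S, w j + (g 0 + w 0) := by
  obtain ⟨S'', hc, rfl⟩ := h
  have hinsert : ∑ j ∈ insert 0 S'', w j ≤ w 0 + ∑ j ∈ S'', w j := by
    by_cases h0 : 0 ∈ S''
    · simp [insert_eq_of_mem h0]
    · rw [sum_insert h0]
  linarith [hc.sum_add_cost_le hg]

/-- The term `K·(2i+1)²` pays for a move at level `i`. Below level `8K` a meld releases less
potential than `K·(2i+1)²` grows by, and the linear term `(8K - i)·K·(128K + 12)` covers the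
difference. -/
def sqCascadeBudget (K i : ℕ) : ℕ :=
  K * (2 * i + 1) ^ 2 + (8 * K - i) * (K * (128 * K + 12))

theorem cascadeBudget_sq {c c' : ℕ} (hc : 0 < c) :
    CascadeBudget (fun i => c * i ^ 2) (fun ℓ => c' * ℓ ^ 2) (sqCascadeBudget (c + c')) where
  done i := by
    unfold sqCascadeBudget
    have : c' * (2 * i) ^ 2 ≤ (c + c') * (2 * i + 1) ^ 2 := by gcongr <;> omega
    omega
  move i := by
    unfold sqCascadeBudget
    have : c * (2 * i + 1) ^ 2 + c' * (2 * i + 1) ^ 2 = (c + c') * (2 * i + 1) ^ 2 := by ring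
    omega
  meld i := by
    unfold sqCascadeBudget
    rcases lt_or_ge i (8 * (c + c')) with hi | hi
    · rw [show 8 * (c + c') - i = 8 * (c + c') - (i + 1) + 1 by omega]
      nlinarith
    · rw [Nat.sub_eq_zero_of_le hi, Nat.sub_eq_zero_of_le (by omega)]
      nlinarith

theorem sum_range_add_le_of_forall_add_le {Φ a : ℕ → ℕ} {C n : ℕ}
    (h : ∀ t < n, Φ (t + 1) + a t ≤ Φ t + C) : ∑ t ∈ range n, a t + Φ n ≤ Φ 0 + C * n := by
  induction n with
  | zero => simp
  | succ n ih =>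
    rw [sum_range_succ]
    linarith [ih fun t ht => h t (by omega), h n (by omega)]

theorem push_amortized_linear_general (c c' : ℕ) (hc : 0 < c) :
    ∃ C : ℕ, ∀ (n : ℕ) (S : ℕ → Finset ℕ) (a ℓ : ℕ → ℕ),
      S 0 = ∅ →
      (∀ t < n, PushStep (S t) (S (t + 1)) (ℓ t)) →
      (∀ t < n, a t ≤ c' * ℓ t ^ 2) →
      ∑ t ∈ Finset.range n, a t ≤ C * n := by
  refine ⟨sqCascadeBudget (c + c') 0, fun n S a ℓ hS0 hpush ha => ?_⟩
  have hstep : ∀ t < n, ∑ i ∈ S (t + 1), c * i ^ 2 + a t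
      ≤ ∑ i ∈ S t, c * i ^ 2 + sqCascadeBudget (c + c') 0 := fun t ht => by
    have := (hpush t ht).sum_add_cost_le (cascadeBudget_sq (c' := c') hc)
    beta_reduce at this
    linarith [ha t ht]
  have := sum_range_add_le_of_forall_add_le (Φ := fun t => ∑ i ∈ S t, c * i ^ 2) hstep
  simp only [hS0, sum_empty, zero_add] at this
  omega

/-- Amortized analysis of Push (each non-vacant position `i` carries potential
`c·i²`): if each Push whose cascade reaches maximum index `ℓ` has actual cost at
most `c'·ℓ²`, then over any sequence of `n` Pushes starting from the all-vacant
state, the total actual work is `O(n)`. -/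
theorem push_amortized_linear (c c' : ℕ) (hc : 0 < c) (hc' : 0 < c') :
    ∃ C : ℕ, ∀ (n : ℕ) (S : ℕ → Finset ℕ) (a ℓ : ℕ → ℕ),
      S 0 = ∅ →
      (∀ t < n, PushStep (S t) (S (t + 1)) (ℓ t)) →
      (∀ t < n, a t ≤ c' * ℓ t ^ 2) →
      ∑ t ∈ Finset.range n, a t ≤ C * n :=
  push_amortized_linear_general c c' hc
end
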